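/- arXiv:2503.23194 — 7 statements merged into one kernel-verified Lean document; each statement's English description precedes it below -/
import Mathlib

section
/- Let a_1, ..., a_n be real numbers with sum equal to 0. Then |sum of a_i^3| ≤ ((n-2)/sqrt(n(n-1))) * (sum of a_i^2)^(3/2). -/
theorem okumura_aux (n : ℕ) (hn : 2 ≤ n) (a : Fin n → ℝ)
    (hsum : ∑ i, a i = 0) :
    ∑ i, (a i) ^ 3 ≤
      ((n : ℝ) - 2) / Real.sqrt ((n : ℝ) * ((n : ℝ) - 1)) *
        (∑ i, (a i) ^ 2) ^ ((3 : ℝ) / 2) := by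
  set N : ℝ := (n : ℝ) with hN
  have hN2 : (2 : ℝ) ≤ N := by rw [hN]; exact_mod_cast hn
  set Q : ℝ := ∑ i, (a i) ^ 2 with hQdef
  have hQ0 : 0 ≤ Q := Finset.sum_nonneg fun i _ => sq_nonneg _
  have hNN : 0 < N * (N - 1) := by nlinarith
  set s : ℝ := Real.sqrt (Q / (N * (N - 1))) with hs
  have hs0 : 0 ≤ s := Real.sqrt_nonneg _
  have hs2 : s ^ 2 = Q / (N * (N - 1)) := Real.sq_sqrt (by positivity)
  have hQs : Q = N * (N - 1) * s ^ 2 := by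
    rw [hs2]; field_simp [(show (0:ℝ) < N - 1 by linarith).ne']
  -- each a i ≤ (N-1)*s
  have hub : ∀ i, a i ≤ (N - 1) * s := by
    intro i
    have herase : ∑ j ∈ Finset.univ.erase i, a j = -a i := by
      have := Finset.sum_erase_add Finset.univ a (Finset.mem_univ i)
      linarith [this.symm ▸ hsum]
    have hcs := sq_sum_le_card_mul_sum_sq (s := Finset.univ.erase i) (f := a)
    rw [herase] at hcs
    have hcard : ((Finset.univ.erase i).card : ℝ) = N - 1 := by
      rw [Finset.card_erase_of_mem (Finset.mem_univ i), Finset.card_univ, Fintype.card_fin,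
        Nat.cast_sub (by omega), hN]
      simp
    have hsumsq : ∑ j ∈ Finset.univ.erase i, a j ^ 2 = Q - a i ^ 2 := by
      rw [hQdef]
      rw [← Finset.sum_erase_add Finset.univ (fun j => a j ^ 2) (Finset.mem_univ i)]
      ring
    have hcs' : (a i) ^ 2 ≤ (N - 1) * (Q - a i ^ 2) := by
      have : ((-a i) ^ 2 : ℝ) ≤ ((Finset.univ.erase i).card : ℝ) * ∑ j ∈ Finset.univ.erase i, a j ^ 2 := by
        exact_mod_cast hcs
      rw [hcard, hsumsq] at this
      nlinarith [this]
    have hsq : a i ^ 2 ≤ ((N - 1) * s) ^ 2 := by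
      have : N * a i ^ 2 ≤ (N - 1) * Q := by nlinarith
      rw [hQs] at this
      nlinarith
    calc a i ≤ |a i| := le_abs_self _
      _ = Real.sqrt ((a i) ^ 2) := (Real.sqrt_sq_eq_abs _).symm
      _ ≤ Real.sqrt (((N - 1) * s) ^ 2) := Real.sqrt_le_sqrt hsq
      _ = (N - 1) * s := Real.sqrt_sq (by nlinarith)
  -- pointwise cubic bound
  have hpt : ∀ i, (a i) ^ 3 ≤
      (N - 3) * s * (a i) ^ 2 + (2 * N - 3) * s ^ 2 * (a i) + (N - 1) * s ^ 3 := by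
    intro i
    have key : (a i + s) ^ 2 * (a i - (N - 1) * s) ≤ 0 :=
      mul_nonpos_of_nonneg_of_nonpos (sq_nonneg _) (by linarith [hub i])
    nlinarith [key]
  have hsum3 : ∑ i, (a i) ^ 3 ≤ (N - 2) * s * Q := by
    calc ∑ i, (a i) ^ 3
        ≤ ∑ i, ((N - 3) * s * (a i) ^ 2 + (2 * N - 3) * s ^ 2 * (a i) + (N - 1) * s ^ 3) :=
          Finset.sum_le_sum fun i _ => hpt i
      _ = (N - 3) * s * Q + (2 * N - 3) * s ^ 2 * (∑ i, a i) + N * ((N - 1) * s ^ 3) := by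
          rw [Finset.sum_add_distrib, Finset.sum_add_distrib, ← Finset.mul_sum,
            ← Finset.mul_sum, Finset.sum_const, Finset.card_univ]
          simp [hQdef, hN, mul_comm]
      _ = (N - 2) * s * Q := by rw [hsum, hQs]; ring
  -- RHS equals (N-2)*s*Q
  have hrhs : (N - 2) / Real.sqrt (N * (N - 1)) *
      Q ^ ((3 : ℝ) / 2) = (N - 2) * s * Q := by
    have hr0 : (0 : ℝ) < Real.sqrt (N * (N - 1)) := Real.sqrt_pos.mpr hNN
    have hr2 : Real.sqrt (N * (N - 1)) ^ 2 = N * (N - 1) := Real.sq_sqrt hNN.le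
    have hQr : Q ^ ((3 : ℝ) / 2) = Real.sqrt Q ^ 3 := by
      rw [Real.sqrt_eq_rpow, ← Real.rpow_natCast (Q ^ ((1:ℝ)/2)) 3, ← Real.rpow_mul hQ0]
      norm_num
    have hsqQ : Real.sqrt Q = s * Real.sqrt (N * (N - 1)) := by
      rw [hQs, show N * (N - 1) * s ^ 2 = (s * Real.sqrt (N * (N - 1))) ^ 2 by
        rw [mul_pow, hr2]; ring]
      exact Real.sqrt_sq (by positivity)
    have h3 : Real.sqrt (N * (N - 1)) ^ 3 = (N * (N - 1)) * Real.sqrt (N * (N - 1)) := by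
      rw [pow_succ, hr2]
    rw [hQr, hsqQ, hQs, div_mul_eq_mul_div, div_eq_iff hr0.ne', mul_pow, h3]
    ring
  rw [hrhs]
  exact hsum3

theorem okumura_inequality (n : ℕ) (hn : 2 ≤ n) (a : Fin n → ℝ)
    (hsum : ∑ i, a i = 0) :
    |∑ i, (a i) ^ 3| ≤
      ((n : ℝ) - 2) / Real.sqrt ((n : ℝ) * ((n : ℝ) - 1)) *
        (∑ i, (a i) ^ 2) ^ ((3 : ℝ) / 2) := by
  rw [abs_le]
  have e3 : ∀ x : ℝ, (-x) ^ 3 = -x ^ 3 := fun x => by ring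
  have e2 : ∀ x : ℝ, (-x) ^ 2 = x ^ 2 := fun x => by ring
  constructor
  · have h := okumura_aux n hn (fun i => -a i)
      (by rw [Finset.sum_neg_distrib, hsum, neg_zero])
    simp only [e3, e2] at h
    rw [Finset.sum_neg_distrib] at h
    linarith
  · exact okumura_aux n hn a hsum
end

section
/- Let a_1, ..., a_n be real numbers with sum 0. If |sum a_i^3| = ((n-2)/sqrt(n(n-1))) * (sum a_i^2)^(3/2), then at least n-1 of the a_i are equal to each other. -/
open Finset

lemma okumura_key (n : ℕ) (hn : 2 ≤ n) (a : Fin n → ℝ)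
    (hsum : ∑ i, a i = 0)
    (heq : ∑ i, (a i) ^ 3 =
      ((n : ℝ) - 2) / Real.sqrt ((n : ℝ) * ((n : ℝ) - 1)) *
        (∑ i, (a i) ^ 2) ^ ((3 : ℝ) / 2)) :
    ∃ c : ℝ, n - 1 ≤ (Finset.univ.filter (fun i => a i = c)).card := by
  set Q : ℝ := ∑ i, (a i) ^ 2 with hQdef
  have hQ0 : 0 ≤ Q := Finset.sum_nonneg fun i _ => sq_nonneg _
  have hN : (2 : ℝ) ≤ (n : ℝ) := by exact_mod_cast hn
  have hNpos : (0 : ℝ) < n := by linarith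
  have hN1pos : (0 : ℝ) < (n : ℝ) - 1 := by linarith
  have hNN1pos : (0 : ℝ) < (n : ℝ) * ((n : ℝ) - 1) := mul_pos hNpos hN1pos
  rcases eq_or_lt_of_le hQ0 with hQz | hQpos
  · -- Q = 0 : all a i = 0
    have hz : ∀ i ∈ Finset.univ, a i = 0 := by
      have := (Finset.sum_eq_zero_iff_of_nonneg
        (fun i (_ : i ∈ Finset.univ) => sq_nonneg (a i))).1 hQz.symm
      intro i hi
      have := this i hi
      exact pow_eq_zero_iff (by norm_num) |>.1 this
    refine ⟨0, ?_⟩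
    have : (Finset.univ.filter (fun i => a i = 0)) = Finset.univ := by
      ext i; simp [hz i (Finset.mem_univ i)]
    rw [this]
    simp only [Finset.card_univ, Fintype.card_fin]
    omega
  · -- Q > 0
    set t : ℝ := Real.sqrt (Q / ((n : ℝ) * ((n : ℝ) - 1))) with htdef
    have ht : 0 < t := Real.sqrt_pos.2 (div_pos hQpos hNN1pos)
    have ht2 : (n : ℝ) * ((n : ℝ) - 1) * t ^ 2 = Q := by
      rw [htdef, Real.sq_sqrt (le_of_lt (div_pos hQpos hNN1pos))]
      field_simp
    -- rewrite heq as ∑ a³ = (N-2) * t * Q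
    have hrpow : Q ^ ((3 : ℝ) / 2) = Q * Real.sqrt Q := by
      rw [show ((3 : ℝ) / 2) = (1 + 1 / 2 : ℝ) by norm_num,
        Real.rpow_add hQpos, Real.rpow_one, ← Real.sqrt_eq_rpow]
    have hsq : Real.sqrt Q = t * Real.sqrt ((n : ℝ) * ((n : ℝ) - 1)) := by
      rw [htdef, Real.sqrt_div hQ0,
        div_mul_cancel₀ _ (ne_of_gt (Real.sqrt_pos.2 hNN1pos))]
    have h3 : ∑ i, (a i) ^ 3 = ((n : ℝ) - 2) * t * Q := by
      rw [heq, hrpow, hsq]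
      have hs : Real.sqrt ((n : ℝ) * ((n : ℝ) - 1)) ≠ 0 :=
        ne_of_gt (Real.sqrt_pos.2 hNN1pos)
      field_simp
    -- bound: a i ≤ (n-1) t
    have hbound : ∀ i, a i ≤ ((n : ℝ) - 1) * t := by
      intro i
      have herase : ∑ j ∈ Finset.univ.erase i, a j = -a i := by
        have := Finset.sum_erase_add Finset.univ a (Finset.mem_univ i)
        linarith [this.trans hsum]
      have hcs := sq_sum_le_card_mul_sum_sq (s := Finset.univ.erase i) (f := a)
      rw [herase, Finset.card_erase_of_mem (Finset.mem_univ i)] at hcs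
      have herase2 : ∑ j ∈ Finset.univ.erase i, (a j) ^ 2 = Q - (a i) ^ 2 := by
        have h := Finset.sum_erase_add Finset.univ (fun j => (a j) ^ 2) (Finset.mem_univ i)
        rw [← hQdef] at h
        linarith
      rw [herase2] at hcs
      have hcard : ((Finset.univ.card (α := Fin n) - 1 : ℕ) : ℝ) = (n : ℝ) - 1 := by
        simp only [Finset.card_univ, Fintype.card_fin]
        have : 1 ≤ n := by omega
        push_cast [Nat.cast_sub this]
        ring
      have hsqle : (a i) ^ 2 ≤ (((n : ℝ) - 1) * t) ^ 2 := by
        have : (-a i) ^ 2 ≤ ((n : ℝ) - 1) * (Q - (a i) ^ 2) := by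
          rw [hcard] at hcs; exact hcs
        nlinarith [ht2]
      nlinarith [mul_pos hN1pos ht]
    -- key sum is zero
    have hzero : ∑ i, (a i - ((n : ℝ) - 1) * t) * (a i + t) ^ 2 = 0 := by
      have expand : ∑ i, (a i - ((n : ℝ) - 1) * t) * (a i + t) ^ 2 =
          ∑ i, (((3 : ℝ) - n) * t * (a i) ^ 2 +
            ((t ^ 2 - 2 * ((n : ℝ) - 1) * t ^ 2) * (a i) +
              ((a i) ^ 3 + (-(((n : ℝ) - 1) * t ^ 3)))) ) :=
        Finset.sum_congr rfl fun i _ => by ring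
      rw [expand, Finset.sum_add_distrib, Finset.sum_add_distrib, Finset.sum_add_distrib,
        ← Finset.mul_sum, ← Finset.mul_sum, Finset.sum_const, Finset.card_univ,
        Fintype.card_fin, nsmul_eq_mul, hsum, ← hQdef, h3]
      linear_combination (-t) * ht2
    have hterm : ∀ i ∈ Finset.univ, (a i - ((n : ℝ) - 1) * t) * (a i + t) ^ 2 = 0 := by
      have := (Finset.sum_eq_zero_iff_of_nonneg
        (f := fun i => -((a i - ((n : ℝ) - 1) * t) * (a i + t) ^ 2)) (s := Finset.univ)
        (fun i _ => by
          show 0 ≤ -((a i - ((n : ℝ) - 1) * t) * (a i + t) ^ 2)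
          have h1 : a i - ((n : ℝ) - 1) * t ≤ 0 := by linarith [hbound i]
          nlinarith [sq_nonneg (a i + t)])).1
        (by rw [Finset.sum_neg_distrib, hzero, neg_zero])
      intro i hi
      have := this i hi
      linarith
    have hdich : ∀ i, a i = ((n : ℝ) - 1) * t ∨ a i = -t := by
      intro i
      rcases mul_eq_zero.1 (hterm i (Finset.mem_univ i)) with h | h
      · left; linarith
      · right; have := pow_eq_zero_iff (n := 2) (by norm_num) |>.1 h; linarith
    -- counting
    set S := Finset.univ.filter (fun i => a i = -t) with hS
    set T := Finset.univ.filter (fun i => a i = ((n : ℝ) - 1) * t) with hT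
    have hne : ((n : ℝ) - 1) * t ≠ -t := by nlinarith [mul_pos hN1pos ht]
    have hdisj : Disjoint S T := by
      rw [Finset.disjoint_left]
      intro i hiS hiT
      exact hne (((Finset.mem_filter.1 hiT).2).symm.trans (Finset.mem_filter.1 hiS).2)
    have hunion : S ∪ T = Finset.univ := by
      ext i
      simp only [hS, hT, Finset.mem_union, Finset.mem_filter, Finset.mem_univ, true_and,
        iff_true]
      exact (hdich i).symm
    have hcards : S.card + T.card = n := by
      rw [← Finset.card_union_of_disjoint hdisj, hunion, Finset.card_univ, Fintype.card_fin]
    have hsumS : ∑ i ∈ S, a i = S.card * (-t) := by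
      rw [Finset.sum_congr rfl (fun i hi => (Finset.mem_filter.1 hi).2), Finset.sum_const,
        nsmul_eq_mul]
    have hsumT : ∑ i ∈ T, a i = T.card * (((n : ℝ) - 1) * t) := by
      rw [Finset.sum_congr rfl (fun i hi => (Finset.mem_filter.1 hi).2), Finset.sum_const,
        nsmul_eq_mul]
    have hsplit : ∑ i ∈ S, a i + ∑ i ∈ T, a i = 0 := by
      rw [← Finset.sum_union hdisj, hunion]; exact hsum
    rw [hsumS, hsumT] at hsplit
    have hTcard : T.card = 1 := by
      have hcast : (S.card : ℝ) + T.card = n := by exact_mod_cast hcards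
      have h0 : ((T.card : ℝ) * ((n : ℝ) - 1) - S.card) * t = 0 := by
        linear_combination hsplit
      rcases mul_eq_zero.1 h0 with h | h
      · have h1 : (T.card : ℝ) * n = 1 * n := by linarith
        have h2 := mul_right_cancel₀ (ne_of_gt hNpos) h1
        exact_mod_cast h2
      · exact absurd h (ne_of_gt ht)
    exact ⟨-t, by rw [← hS]; omega⟩

theorem okumura_equality_case (n : ℕ) (hn : 2 ≤ n) (a : Fin n → ℝ)
    (hsum : ∑ i, a i = 0)
    (heq : |∑ i, (a i) ^ 3| =
      ((n : ℝ) - 2) / Real.sqrt ((n : ℝ) * ((n : ℝ) - 1)) *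
        (∑ i, (a i) ^ 2) ^ ((3 : ℝ) / 2)) :
    ∃ c : ℝ, n - 1 ≤ (Finset.univ.filter (fun i => a i = c)).card := by
  have hN : (2 : ℝ) ≤ (n : ℝ) := by exact_mod_cast hn
  have hrhs : 0 ≤ ((n : ℝ) - 2) / Real.sqrt ((n : ℝ) * ((n : ℝ) - 1)) *
      (∑ i, (a i) ^ 2) ^ ((3 : ℝ) / 2) := by
    apply mul_nonneg
    · apply div_nonneg (by linarith) (Real.sqrt_nonneg _)
    · exact Real.rpow_nonneg (Finset.sum_nonneg fun i _ => sq_nonneg _) _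
  rcases (abs_eq hrhs).1 heq with h | h
  · exact okumura_key n hn a hsum h
  · have hsum' : ∑ i, (-a) i = 0 := by simp [hsum]
    have h' : ∑ i, ((-a) i) ^ 3 =
        ((n : ℝ) - 2) / Real.sqrt ((n : ℝ) * ((n : ℝ) - 1)) *
          (∑ i, ((-a) i) ^ 2) ^ ((3 : ℝ) / 2) := by
      simp only [Pi.neg_apply]
      rw [show ∑ i, (-a i) ^ 3 = -∑ i, (a i) ^ 3 by
        rw [← Finset.sum_neg_distrib]; exact Finset.sum_congr rfl fun i _ => by ring]
      rw [show ∑ i, (-a i) ^ 2 = ∑ i, (a i) ^ 2 from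
        Finset.sum_congr rfl fun i _ => by ring]
      linarith
    obtain ⟨c, hc⟩ := okumura_key n hn (-a) hsum' h'
    refine ⟨-c, le_trans hc (le_of_eq ?_)⟩
    congr 1
    ext i
    simp only [Finset.mem_filter, Pi.neg_apply]
    constructor <;> intro ⟨h1, h2⟩ <;> exact ⟨h1, by linarith⟩
end

section
/- Let λ_1 < λ_2 < λ_3 ≤ λ_4 be real numbers with λ_1 + λ_2 + λ_3 + λ_4 = 0 and λ_3 = λ_4 > 0. If additionally λ_1^2 + λ_2^2 + λ_3^2 + λ_4^2 = S with S/2 > 2λ_4^2, then λ_1^3 + λ_2^3 + λ_3^3 + λ_4^3 < 0. -/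
theorem cubic_sum_neg_of_top_two_equal (lam1 lam2 lam3 lam4 S : ℝ)
    (h12 : lam1 < lam2) (h23 : lam2 < lam3) (h34 : lam3 ≤ lam4)
    (hsum : lam1 + lam2 + lam3 + lam4 = 0)
    (heq : lam3 = lam4) (h4pos : 0 < lam4)
    (hS : lam1 ^ 2 + lam2 ^ 2 + lam3 ^ 2 + lam4 ^ 2 = S)
    (hdisc : 2 * lam4 ^ 2 < S / 2) :
    lam1 ^ 3 + lam2 ^ 3 + lam3 ^ 3 + lam4 ^ 3 < 0 := by
  subst heq
  nlinarith [sq_nonneg (lam1 + lam2), sq_nonneg (lam1 - lam2), mul_pos h4pos h4pos]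
end

section
/- Let λ_1 < λ_2 < λ_3 < λ_4 be real numbers and set γ = (λ_2-λ_1)^2(λ_3-λ_1)^2(λ_3-λ_2)^2. Define L_1 by γL_1 = (λ_4-λ_3)[(λ_3-λ_1)^2(λ_3-λ_2) - (λ_4-λ_2)(λ_4-λ_1)^2] - (λ_4-λ_2)(λ_3-λ_2)(λ_2-λ_1)^2. Then L_1 < 0. -/
theorem L1_neg (lam1 lam2 lam3 lam4 γ L1 : ℝ)
    (h12 : lam1 < lam2) (h23 : lam2 < lam3) (h34 : lam3 < lam4)
    (hγ : γ = (lam2 - lam1) ^ 2 * (lam3 - lam1) ^ 2 * (lam3 - lam2) ^ 2)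
    (hL : γ * L1 = (lam4 - lam3) * ((lam3 - lam1) ^ 2 * (lam3 - lam2)
        - (lam4 - lam2) * (lam4 - lam1) ^ 2)
      - (lam4 - lam2) * (lam3 - lam2) * (lam2 - lam1) ^ 2) :
    L1 < 0 := by
  have a1 : (0:ℝ) < lam2 - lam1 := by linarith
  have a2 : (0:ℝ) < lam3 - lam2 := by linarith
  have a3 : (0:ℝ) < lam3 - lam1 := by linarith
  have a4 : (0:ℝ) < lam4 - lam3 := by linarith
  have a5 : (0:ℝ) < lam4 - lam2 := by linarith
  have a6 : (0:ℝ) < lam4 - lam1 := by linarith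
  have hγ0 : 0 < γ := by
    rw [hγ]
    exact mul_pos (mul_pos (pow_pos a1 2) (pow_pos a3 2)) (pow_pos a2 2)
  have h1 : (lam3 - lam1) ^ 2 * (lam3 - lam2) < (lam4 - lam2) * (lam4 - lam1) ^ 2 := by
    calc (lam3 - lam1) ^ 2 * (lam3 - lam2) < (lam4 - lam1) ^ 2 * (lam3 - lam2) := by
            have : (lam3 - lam1) ^ 2 < (lam4 - lam1) ^ 2 := by nlinarith
            nlinarith
      _ < (lam4 - lam1) ^ 2 * (lam4 - lam2) := by nlinarith [pow_pos a6 2]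
      _ = (lam4 - lam2) * (lam4 - lam1) ^ 2 := by ring
  have h2 : γ * L1 < 0 := by
    rw [hL]
    have hA : (lam4 - lam3) * ((lam3 - lam1) ^ 2 * (lam3 - lam2)
        - (lam4 - lam2) * (lam4 - lam1) ^ 2) < 0 :=
      mul_neg_of_pos_of_neg a4 (by linarith)
    have hB : 0 < (lam4 - lam2) * (lam3 - lam2) * (lam2 - lam1) ^ 2 :=
      mul_pos (mul_pos a5 a2) (pow_pos a1 2)
    linarith
  by_contra h
  push_neg at h
  nlinarith
end

section
/- Let λ_1 < λ_2 < λ_3 < λ_4 be real numbers and set γ = (λ_2-λ_1)^2(λ_3-λ_1)^2(λ_3-λ_2)^2. Define L_2 by γL_2 = (λ_4-λ_3)[(λ_3-λ_2)^2(λ_3-λ_1) - (λ_4-λ_1)(λ_4-λ_2)^2] - (λ_4-λ_1)(λ_3-λ_1)(λ_2-λ_1)^2. Then L_2 < 0. -/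
theorem L2_neg (lam1 lam2 lam3 lam4 γ L2 : ℝ)
    (h12 : lam1 < lam2) (h23 : lam2 < lam3) (h34 : lam3 < lam4)
    (hγ : γ = (lam2 - lam1) ^ 2 * (lam3 - lam1) ^ 2 * (lam3 - lam2) ^ 2)
    (hL : γ * L2 = (lam4 - lam3) * ((lam3 - lam2) ^ 2 * (lam3 - lam1)
        - (lam4 - lam1) * (lam4 - lam2) ^ 2)
      - (lam4 - lam1) * (lam3 - lam1) * (lam2 - lam1) ^ 2) :
    L2 < 0 := by
  have h13 : lam1 < lam3 := h12.trans h23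
  have h14 : lam1 < lam4 := h13.trans h34
  have h24 : lam2 < lam4 := h23.trans h34
  have hγpos : 0 < γ := by
    rw [hγ]
    have p1 : (0:ℝ) < (lam2 - lam1) ^ 2 := pow_pos (sub_pos.2 h12) 2
    have p2 : (0:ℝ) < (lam3 - lam1) ^ 2 := pow_pos (sub_pos.2 h13) 2
    have p3 : (0:ℝ) < (lam3 - lam2) ^ 2 := pow_pos (sub_pos.2 h23) 2
    positivity
  have hbr : (lam3 - lam2) ^ 2 * (lam3 - lam1) < (lam4 - lam1) * (lam4 - lam2) ^ 2 := by
    have a : (lam3 - lam2) ^ 2 < (lam4 - lam2) ^ 2 := by nlinarith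
    have := mul_lt_mul'' a (show lam3 - lam1 < lam4 - lam1 by linarith)
      (sq_nonneg _) (by linarith)
    linarith [this]
  have hneg : γ * L2 < 0 := by
    rw [hL]
    have h1 : (lam4 - lam3) * ((lam3 - lam2) ^ 2 * (lam3 - lam1)
        - (lam4 - lam1) * (lam4 - lam2) ^ 2) < 0 :=
      mul_neg_of_pos_of_neg (sub_pos.2 h34) (by linarith)
    have h2 : 0 < (lam4 - lam1) * (lam3 - lam1) * (lam2 - lam1) ^ 2 := by
      have q1 : (0:ℝ) < lam4 - lam1 := by linarith
      have q2 : (0:ℝ) < lam3 - lam1 := by linarith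
      have q3 : (0:ℝ) < (lam2 - lam1) ^ 2 := pow_pos (sub_pos.2 h12) 2
      positivity
    linarith
  by_contra h
  push_neg at h
  nlinarith [mul_nonneg hγpos.le h]
end

section
/- Let λ_1 < λ_2 < λ_3 < λ_4 be real numbers and set γ = (λ_2-λ_1)^2(λ_3-λ_1)^2(λ_3-λ_2)^2. Define L_3 by γL_3 = (λ_2-λ_1)[(λ_3-λ_2)^2(λ_4-λ_2) - (λ_4-λ_1)(λ_3-λ_1)^2] - (λ_4-λ_1)(λ_4-λ_2)(λ_4-λ_3)^2. Then L_3 < 0. -/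
theorem L3_neg (lam1 lam2 lam3 lam4 γ L3 : ℝ)
    (h12 : lam1 < lam2) (h23 : lam2 < lam3) (h34 : lam3 < lam4)
    (hγ : γ = (lam2 - lam1) ^ 2 * (lam3 - lam1) ^ 2 * (lam3 - lam2) ^ 2)
    (hL : γ * L3 = (lam2 - lam1) * ((lam3 - lam2) ^ 2 * (lam4 - lam2)
        - (lam4 - lam1) * (lam3 - lam1) ^ 2)
      - (lam4 - lam1) * (lam4 - lam2) * (lam4 - lam3) ^ 2) :
    L3 < 0 := by
  have ha : 0 < lam2 - lam1 := by linarith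
  have hb : 0 < lam3 - lam2 := by linarith
  have hc : 0 < lam4 - lam3 := by linarith
  have hγpos : 0 < γ := by
    rw [hγ]
    exact mul_pos (mul_pos (pow_pos ha 2) (pow_pos (by linarith : (0:ℝ) < lam3 - lam1) 2)) (pow_pos hb 2)
  have hneg : γ * L3 < 0 := by
    rw [hL]
    nlinarith [mul_pos ha hb, mul_pos hb hc, mul_pos ha hc, sq_nonneg (lam4 - lam3),
      mul_pos (mul_pos ha hb) hc, sq_nonneg (lam3 - lam1), sq_nonneg (lam2 - lam1),
      mul_pos ha (mul_pos hb hb), mul_pos hc (mul_pos hc hc), mul_pos ha (mul_pos ha ha)]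
  by_contra h
  push_neg at h
  nlinarith [mul_nonneg hγpos.le h]
end

section
/- Let λ_1 < λ_2 < λ_3 < λ_4 be real numbers and set γ = (λ_2-λ_1)^2(λ_3-λ_1)^2(λ_3-λ_2)^2. Define L_4 by γL_4 = (λ_2-λ_1)[(λ_4-λ_2)^2(λ_3-λ_2) - (λ_3-λ_1)(λ_4-λ_1)^2] - (λ_3-λ_1)(λ_3-λ_2)(λ_4-λ_3)^2. Then L_4 < 0. -/
theorem L4_neg (lam1 lam2 lam3 lam4 γ L4 : ℝ)
    (h12 : lam1 < lam2) (h23 : lam2 < lam3) (h34 : lam3 < lam4)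
    (hγ : γ = (lam2 - lam1) ^ 2 * (lam3 - lam1) ^ 2 * (lam3 - lam2) ^ 2)
    (hL : γ * L4 = (lam2 - lam1) * ((lam4 - lam2) ^ 2 * (lam3 - lam2)
        - (lam3 - lam1) * (lam4 - lam1) ^ 2)
      - (lam3 - lam1) * (lam3 - lam2) * (lam4 - lam3) ^ 2) :
    L4 < 0 := by
  have ha : (0:ℝ) < lam2 - lam1 := by linarith
  have hb : (0:ℝ) < lam3 - lam2 := by linarith
  have hc : (0:ℝ) < lam4 - lam3 := by linarith
  have hac : (0:ℝ) < lam3 - lam1 := by linarith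
  have hγpos : 0 < γ := by
    rw [hγ]
    exact mul_pos (mul_pos (pow_pos ha 2) (pow_pos hac 2)) (pow_pos hb 2)
  have hrhs : γ * L4 < 0 := by
    rw [hL]
    nlinarith [mul_pos ha hb, mul_pos hb hc, mul_pos ha hc, sq_nonneg (lam4 - lam3),
      mul_pos (mul_pos ha hb) hc, mul_pos (mul_pos ha ha) hb, mul_pos (mul_pos ha ha) ha]
  by_contra h
  push_neg at h
  nlinarith
end
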